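/- arXiv:1110.4093 — 2 statements merged into one kernel-verified Lean document; each statement's English description precedes it below -/
import Mathlib

section
/- In PSL(2,ℤ), if g = t₁·t₂ with t₁ = t₂ both equal to the same Dehn twist, then g is conjugate to R². Conversely, the only way to write R² as a product of two Dehn twists t₁·t₂ is t₁ = t₂ = R. -/
abbrev SL2Z := Matrix.SpecialLinearGroup (Fin 2) ℤ

/-- The modular group `PSL(2,ℤ) = SL(2,ℤ)/±id`. -/
abbrev PSL2Z := SL2Z ⧸ Subgroup.center SL2Z

/-- The image of `[[1,1],[0,1]]` in `PSL(2,ℤ)`. -/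
def L : PSL2Z := QuotientGroup.mk ⟨!![1, 1; 0, 1], by simp [Matrix.det_fin_two_of]⟩

/-- The image of `[[1,0],[-1,1]]` in `PSL(2,ℤ)`. -/
def R : PSL2Z := QuotientGroup.mk ⟨!![1, 0; -1, 1], by simp [Matrix.det_fin_two_of]⟩


/-- A Dehn twist in `PSL(2,ℤ)` is a conjugate of `R`. -/
def IsDehnTwist (t : PSL2Z) : Prop := IsConj R t

/-!
Conjugating `R₀ = [[1, 0], [-1, 1]]` by a matrix with second column `(b, d)` gives
`twist b d = 1 + (b, d)ᵀ (-d, b)`. With `k = d f - b h`,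
`twist b d * twist f h = twist b d + twist f h - 1 - k (b, d)ᵀ (-h, f)`, whose trace is `2 - k²`.
If this product is `R₀²` (trace `2`) then `k = 0`, and the off-diagonal entries give `b² + f² = 0`
and `d² + h² = 2`, so both factors are `R₀`. If it is `-R₀²` (trace `-2`) then `k² = 4`, and the
lower left entry says that `d² + h² - k d h`, which is `(2d - kh)² / 4`, equals `-2`.
-/

namespace Matrix.SpecialLinearGroup

variable {R : Type*} [CommRing R] [NoZeroDivisors R]

theorem eq_one_or_eq_neg_one_of_mem_center {A : SpecialLinearGroup (Fin 2) R}
    (hA : A ∈ Subgroup.center (SpecialLinearGroup (Fin 2) R)) : A = 1 ∨ A = -1 := by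
  obtain ⟨r, hr, hrA⟩ := mem_center_iff.mp hA
  rcases mul_self_eq_one_iff.mp (by simpa [sq] using hr) with rfl | rfl
  · left; ext i j; simp [← hrA]
  · right; ext i j; fin_cases i <;> fin_cases j <;> simp [← hrA]

theorem eq_or_eq_neg_of_mk_eq_mk {A B : SpecialLinearGroup (Fin 2) R}
    (h : (A : SpecialLinearGroup (Fin 2) R ⧸ Subgroup.center _) = B) : B = A ∨ B = -A := by
  rcases eq_one_or_eq_neg_one_of_mem_center (QuotientGroup.eq.mp h) with h | h
  · exact .inl (inv_mul_eq_one.mp h).symm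
  · exact .inr (by rw [← mul_neg_one, ← h, mul_inv_cancel_left])

end Matrix.SpecialLinearGroup

theorem Int.sq_eq_one_of_sq_add_sq_eq_two {a b : ℤ} (h : a ^ 2 + b ^ 2 = 2) : a ^ 2 = 1 := by
  have ha : -1 ≤ a ∧ a ≤ 1 := by constructor <;> nlinarith [sq_nonneg b]
  have hb : -1 ≤ b ∧ b ≤ 1 := by constructor <;> nlinarith [sq_nonneg a]
  obtain ⟨ha₀, ha₁⟩ := ha
  obtain ⟨hb₀, hb₁⟩ := hb
  interval_cases a <;> interval_cases b <;> simp_all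

def R₀ : SL2Z := ⟨!![1, 0; -1, 1], by simp [Matrix.det_fin_two_of]⟩

def twist (b d : ℤ) : SL2Z :=
  ⟨!![1 - b * d, b ^ 2; -d ^ 2, 1 + b * d], by simp [Matrix.det_fin_two_of]; ring⟩

open Matrix.SpecialLinearGroup

theorem mul_R₀_mul_inv (A : SL2Z) : A * R₀ * A⁻¹ = twist (A 0 1) (A 1 1) := by
  have hdet : A 0 0 * A 1 1 - A 0 1 * A 1 0 = 1 := by
    rw [← Matrix.det_fin_two]; exact A.det_coe
  ext i j
  rw [coe_mul, coe_mul, coe_inv]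
  fin_cases i <;> fin_cases j <;>
    simp [Matrix.adjugate_fin_two, R₀, twist, Matrix.mul_apply, Fin.sum_univ_two] <;> linarith

theorem twist_zero {d : ℤ} (hd : d ^ 2 = 1) : twist 0 d = R₀ := by
  ext i j
  fin_cases i <;> fin_cases j <;> simp [twist, R₀, hd]

theorem IsDehnTwist.exists_eq_mk_twist {t : PSL2Z} (ht : IsDehnTwist t) :
    ∃ b d, t = QuotientGroup.mk (twist b d) := by
  obtain ⟨c, rfl⟩ := isConj_iff.mp ht
  obtain ⟨A, rfl⟩ := QuotientGroup.mk_surjective c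
  exact ⟨_, _, by rw [← mul_R₀_mul_inv]; rfl⟩

theorem coe_twist_mul_twist (b d f h : ℤ) :
    ((twist b d * twist f h : SL2Z) : Matrix (Fin 2) (Fin 2) ℤ) =
      !![1 - b * d - f * h + (d * f - b * h) * b * h, b ^ 2 + f ^ 2 - (d * f - b * h) * b * f;
        -d ^ 2 - h ^ 2 + (d * f - b * h) * d * h, 1 + b * d + f * h - (d * f - b * h) * d * f] := by
  ext i j
  rw [coe_mul]
  fin_cases i <;> fin_cases j <;> simp [twist, Matrix.mul_apply, Fin.sum_univ_two] <;> ring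

theorem coe_R₀_sq : ((R₀ ^ 2 : SL2Z) : Matrix (Fin 2) (Fin 2) ℤ) = !![1, 0; -2, 1] := by
  ext i j
  rw [coe_pow, sq]
  fin_cases i <;> fin_cases j <;> simp [R₀, Matrix.mul_apply, Fin.sum_univ_two]

theorem twist_eq_R₀_of_twist_mul_twist_eq_R₀_sq {b d f h : ℤ}
    (hP : twist b d * twist f h = R₀ ^ 2) : twist b d = R₀ ∧ twist f h = R₀ := by
  have := congrArg Subtype.val hP
  rw [coe_twist_mul_twist, coe_R₀_sq] at this
  simp only [EmbeddingLike.apply_eq_iff_eq, Matrix.vecCons_inj, and_true] at this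
  obtain ⟨⟨h₀₀, h₀₁⟩, h₁₀, h₁₁⟩ := this
  have hk : d * f - b * h = 0 :=
    pow_eq_zero_iff two_ne_zero |>.mp (by linear_combination -(h₀₀ + h₁₁))
  rw [hk, zero_mul, zero_mul, sub_zero] at h₀₁
  rw [hk, zero_mul, zero_mul, add_zero] at h₁₀
  obtain rfl : b = 0 := by nlinarith
  obtain rfl : f = 0 := by nlinarith
  have hdh : d ^ 2 + h ^ 2 = 2 := by linear_combination -h₁₀
  exact ⟨twist_zero (Int.sq_eq_one_of_sq_add_sq_eq_two hdh),
    twist_zero (Int.sq_eq_one_of_sq_add_sq_eq_two ((add_comm _ _).trans hdh))⟩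

theorem twist_mul_twist_ne_neg_R₀_sq (b d f h : ℤ) : twist b d * twist f h ≠ -(R₀ ^ 2) := by
  intro hP
  have := congrArg Subtype.val hP
  rw [coe_twist_mul_twist, coe_neg, coe_R₀_sq] at this
  simp only [Matrix.neg_of, Matrix.neg_cons, neg_zero, Matrix.neg_empty, neg_neg,
    EmbeddingLike.apply_eq_iff_eq, Matrix.vecCons_inj, and_true] at this
  obtain ⟨⟨h₀₀, -⟩, h₁₀, h₁₁⟩ := this
  set k := d * f - b * h
  have hk : k ^ 2 = 4 := by linear_combination -(h₀₀ + h₁₁)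
  nlinarith [sq_nonneg (2 * d - k * h)]

/-- The square of any Dehn twist is conjugate to `R²`; conversely, the only way
to write `R²` as a product of two Dehn twists is `R · R`. -/
theorem square_of_dehn_twist_and_factorizations_of_R2 :
    (∀ t : PSL2Z, IsDehnTwist t → IsConj (R ^ 2) (t * t)) ∧
    (∀ t₁ t₂ : PSL2Z, IsDehnTwist t₁ → IsDehnTwist t₂ → t₁ * t₂ = R ^ 2 →
      t₁ = R ∧ t₂ = R) := by
  refine ⟨fun t ht ↦ by simpa only [sq] using ht.pow 2, fun t₁ t₂ h₁ h₂ h₁₂ ↦ ?_⟩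
  obtain ⟨b, d, rfl⟩ := h₁.exists_eq_mk_twist
  obtain ⟨f, h, rfl⟩ := h₂.exists_eq_mk_twist
  rcases eq_or_eq_neg_of_mk_eq_mk (A := R₀ ^ 2) h₁₂.symm with hP | hP
  · obtain ⟨h₁, h₂⟩ := twist_eq_R₀_of_twist_mul_twist_eq_R₀_sq hP
    exact ⟨congrArg QuotientGroup.mk h₁, congrArg QuotientGroup.mk h₂⟩
  · exact absurd hP (twist_mul_twist_ne_neg_R₀_sq b d f h)
end

section
/- In PSL(2,ℤ), if a hyperbolic element g is a product of two Dehn twists and g = hⁿ for some h ∈ PSL(2,ℤ) and n ≥ 1, then n ≤ 2. -/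
/-- An element of `PSL(2,ℤ)` is hyperbolic if a (hence any) matrix
representative has trace of absolute value greater than `2`. -/
def IsHyperbolic (g : PSL2Z) : Prop :=
  ∃ A : SL2Z, (QuotientGroup.mk A : PSL2Z) = g ∧
    2 < |Matrix.trace (A : Matrix (Fin 2) (Fin 2) ℤ)|

open Matrix Polynomial Polynomial.Chebyshev

section TwoByTwo

variable {α : Type*} [CommRing α]

theorem Matrix.sq_eq_trace_smul_sub_one {A : Matrix (Fin 2) (Fin 2) α} (hA : A.det = 1) :
    A ^ 2 = A.trace • A - 1 := by
  rw [det_fin_two] at hA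
  ext i j
  fin_cases i <;> fin_cases j <;>
    simp only [Fin.zero_eta, Fin.mk_one, Fin.isValue, sq, mul_apply, Fin.sum_univ_two,
      trace_fin_two, sub_apply, smul_apply, smul_eq_mul, one_apply_eq, ne_eq, zero_ne_one,
      one_ne_zero, not_false_eq_true, one_apply_ne, sub_zero] <;>
    first | linear_combination -hA | ring1

theorem Matrix.pow_succ_eq_chebyshevS {A : Matrix (Fin 2) (Fin 2) α} (hA : A.det = 1) (n : ℕ) :
    A ^ (n + 1) = (S α n).eval A.trace • A - (S α ((n : ℤ) - 1)).eval A.trace • 1 := by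
  induction n with
  | zero => simp
  | succ n ih =>
    rw [pow_succ, ih, sub_mul, smul_mul_assoc, ← sq, sq_eq_trace_smul_sub_one hA, smul_mul_assoc,
      one_mul, Nat.cast_add_one, S_add_one, add_sub_cancel_right]
    simp only [eval_sub, eval_mul, eval_X]
    module

theorem Matrix.pow_succ_apply_zero_one {A : Matrix (Fin 2) (Fin 2) α} (hA : A.det = 1) (n : ℕ) :
    (A ^ (n + 1)) 0 1 = (S α n).eval A.trace * A 0 1 := by
  simp [pow_succ_eq_chebyshevS hA]

theorem Matrix.trace_pow_succ {A : Matrix (Fin 2) (Fin 2) α} (hA : A.det = 1) (n : ℕ) :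
    (A ^ (n + 1)).trace =
      A.trace * (S α n).eval A.trace - 2 * (S α ((n : ℤ) - 1)).eval A.trace := by
  rw [pow_succ_eq_chebyshevS hA, trace_sub, trace_smul, trace_smul, trace_one]
  simp only [smul_eq_mul, Fintype.card_fin, Nat.cast_ofNat]
  ring

theorem Matrix.sq_trace_pow_succ_sub_four {A : Matrix (Fin 2) (Fin 2) α} (hA : A.det = 1) (n : ℕ) :
    (A ^ (n + 1)).trace ^ 2 - 4 = (A.trace ^ 2 - 4) * (S α n).eval A.trace ^ 2 := by
  have h := congrArg (eval A.trace) (S_sq_add_S_sq α ((n : ℤ) - 1))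
  simp only [sub_add_cancel, eval_sub, eval_add, eval_mul, eval_pow, eval_X, eval_one] at h
  rw [trace_pow_succ hA]
  linear_combination 4 * h

end TwoByTwo

theorem Polynomial.Chebyshev.S_eval_pos_and_le_succ {α : Type*} [CommRing α] [LinearOrder α]
    [IsStrictOrderedRing α] {x : α} (hx : 2 ≤ x) (n : ℕ) :
    0 < (S α n).eval x ∧ (S α n).eval x ≤ (S α (n + 1)).eval x := by
  induction n with
  | zero => simpa using hx.trans' one_le_two
  | succ n ih =>
    obtain ⟨hpos, hle⟩ := ih
    rw [Nat.cast_add_one, add_assoc, one_add_one_eq_two, S_add_two]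
    simp only [eval_sub, eval_mul, eval_X]
    constructor <;> nlinarith

theorem Polynomial.Chebyshev.monotone_S_eval {α : Type*} [CommRing α] [LinearOrder α]
    [IsStrictOrderedRing α] {x : α} (hx : 2 ≤ x) : Monotone fun n : ℕ => (S α n).eval x :=
  monotone_nat_of_le_succ fun n => by exact_mod_cast (S_eval_pos_and_le_succ hx n).2

theorem sq_sub_four_mul_ne {τ v m : ℤ} (hτ : 3 ≤ τ) (hv : τ ^ 2 - 1 ≤ v) (hm : 0 ≤ m) :
    (τ ^ 2 - 4) * v ≠ m * (v * m - 4) := by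
  intro h
  replace h : v * (m ^ 2 + 4 - τ ^ 2) = 4 * m := by linear_combination -h
  have hv8 : 8 ≤ v := by nlinarith
  rcases lt_trichotomy m τ with hlt | rfl | hgt
  · have : m ^ 2 + 4 - τ ^ 2 < 0 := by nlinarith
    nlinarith
  · nlinarith
  · have : m < m ^ 2 + 4 - τ ^ 2 := by nlinarith
    nlinarith

theorem Matrix.ne_smul_pow_of_trace_eq_two_sub_sq {M K : Matrix (Fin 2) (Fin 2) ℤ}
    (hK : K.det = 1) {n : ℕ} (hn : 3 ≤ n) {p r : ℤ} (hp : 4 < p ^ 2) (hr : r ^ 2 = 1)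
    (hM01 : M 0 1 = p ^ 2) (hMtr : M.trace = 2 - p ^ 2) : M ≠ r • K ^ n := by
  wlog hτ : 0 ≤ K.trace generalizing K r
  · have hK' : (-K).det = 1 := by simpa [det_neg] using hK
    have hτ' : 0 ≤ (-K).trace := by rw [trace_neg]; linarith
    rcases n.even_or_odd with hev | hodd
    · simpa [hev.neg_pow] using this hK' hr hτ'
    · simpa [hodd.neg_pow] using this hK' (r := -r) (by rwa [neg_sq]) hτ'
  intro hM
  obtain ⟨k, rfl⟩ : ∃ k, n = k + 1 := ⟨n - 1, by omega⟩
  set τ := K.trace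
  set s := (S ℤ k).eval τ
  set m := r * K 0 1
  have h01 : p ^ 2 = s * m := by
    rw [← hM01, hM, smul_apply, pow_succ_apply_zero_one hK, smul_eq_mul]
    ring
  have hdisc : p ^ 2 * (p ^ 2 - 4) = (τ ^ 2 - 4) * s ^ 2 := by
    have htr := sq_trace_pow_succ_sub_four hK k
    rw [hM, trace_smul, smul_eq_mul] at hMtr
    linear_combination (-(r * (K ^ (k + 1)).trace + 2 - p ^ 2)) * hMtr
      + (K ^ (k + 1)).trace ^ 2 * hr + htr
  have hτ3 : 3 ≤ τ := by
    by_contra! hlt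
    have hτ2 : τ ^ 2 ≤ 4 := by nlinarith
    nlinarith [mul_nonpos_of_nonpos_of_nonneg (sub_nonpos.mpr hτ2) (sq_nonneg s)]
  have hs : τ ^ 2 - 1 ≤ s := by
    have := monotone_S_eval (α := ℤ) (show 2 ≤ τ by linarith) (show 2 ≤ k by omega)
    simpa [S_two] using this
  have hs0 : 0 < s := by nlinarith
  have hm : 0 ≤ m := (mul_nonneg_iff_of_pos_left hs0).mp (h01 ▸ sq_nonneg p)
  refine sq_sub_four_mul_ne hτ3 hs hm (mul_left_cancel₀ hs0.ne' ?_)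
  linear_combination -hdisc + (s * m - 4 + p ^ 2) * h01

def rMatrix : SL2Z := ⟨!![1, 0; -1, 1], by simp [Matrix.det_fin_two_of]⟩

theorem coe_rMatrix : (rMatrix : Matrix (Fin 2) (Fin 2) ℤ) = !![1, 0; -1, 1] := rfl

theorem exists_sq_eq_one_smul_of_mk_eq {A B : SL2Z}
    (h : (QuotientGroup.mk A : PSL2Z) = QuotientGroup.mk B) :
    ∃ r : ℤ, r ^ 2 = 1 ∧ (B : Matrix (Fin 2) (Fin 2) ℤ) = r • (A : Matrix (Fin 2) (Fin 2) ℤ) := by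
  have hcenter : A⁻¹ * B ∈ Subgroup.center SL2Z := QuotientGroup.eq.mp h
  obtain ⟨r, hr, hAB⟩ := Matrix.SpecialLinearGroup.mem_center_iff.mp hcenter
  refine ⟨r, hr, ?_⟩
  calc (B : Matrix (Fin 2) (Fin 2) ℤ) = ((A * (A⁻¹ * B) : SL2Z) : Matrix (Fin 2) (Fin 2) ℤ) := by
        rw [mul_inv_cancel_left]
    _ = r • (A : Matrix (Fin 2) (Fin 2) ℤ) := by
        rw [Matrix.SpecialLinearGroup.coe_mul, ← hAB, smul_eq_mul_diagonal, scalar_apply]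

theorem IsHyperbolic.two_lt_abs_trace {A : SL2Z} (hA : IsHyperbolic (QuotientGroup.mk A)) :
    2 < |(A : Matrix (Fin 2) (Fin 2) ℤ).trace| := by
  obtain ⟨B, hBA, hB⟩ := hA
  obtain ⟨r, hr, hAB⟩ := exists_sq_eq_one_smul_of_mk_eq hBA
  rw [hAB, trace_smul, smul_eq_mul, abs_mul]
  rcases sq_eq_one_iff.mp hr with rfl | rfl <;> simpa using hB

theorem IsHyperbolic.conj {g : PSL2Z} (hg : IsHyperbolic g) (c : PSL2Z) :
    IsHyperbolic (c * g * c⁻¹) := by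
  obtain ⟨A, rfl, hA⟩ := hg
  obtain ⟨C, rfl⟩ := QuotientGroup.mk_surjective c
  refine ⟨C * A * C⁻¹, rfl, ?_⟩
  simp only [Matrix.SpecialLinearGroup.coe_mul]
  rwa [trace_mul_cycle, ← Matrix.SpecialLinearGroup.coe_mul, inv_mul_cancel,
    Matrix.SpecialLinearGroup.coe_one, one_mul]

theorem rMatrix_mul_conj_apply_zero_one (C : SL2Z) :
    ((rMatrix * (C * rMatrix * C⁻¹) : SL2Z) : Matrix (Fin 2) (Fin 2) ℤ) 0 1 = (C 0 1) ^ 2 := by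
  simp only [Matrix.SpecialLinearGroup.coe_mul, Matrix.SpecialLinearGroup.coe_inv, coe_rMatrix,
    adjugate_fin_two, mul_apply, Fin.sum_univ_two, of_apply, cons_val', cons_val_fin_one,
    cons_val_zero, cons_val_one]
  ring

theorem trace_rMatrix_mul_conj (C : SL2Z) :
    ((rMatrix * (C * rMatrix * C⁻¹) : SL2Z) : Matrix (Fin 2) (Fin 2) ℤ).trace =
      2 - (C 0 1) ^ 2 := by
  have hC := C.property
  rw [det_fin_two] at hC
  simp only [Matrix.SpecialLinearGroup.coe_mul, Matrix.SpecialLinearGroup.coe_inv, coe_rMatrix,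
    adjugate_fin_two, trace_fin_two, mul_apply, Fin.sum_univ_two, of_apply, cons_val',
    cons_val_fin_one, cons_val_zero, cons_val_one]
  linear_combination 2 * hC

theorem le_two_of_R_mul_conj_eq_pow {c k : PSL2Z} {n : ℕ}
    (hyp : IsHyperbolic (R * (c * R * c⁻¹))) (hpow : R * (c * R * c⁻¹) = k ^ n) : n ≤ 2 := by
  obtain ⟨C, rfl⟩ := QuotientGroup.mk_surjective c
  obtain ⟨K, rfl⟩ := QuotientGroup.mk_surjective k
  set M := rMatrix * (C * rMatrix * C⁻¹)
  have hMR : (QuotientGroup.mk M : PSL2Z) =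
      R * (QuotientGroup.mk C * R * (QuotientGroup.mk C)⁻¹) := rfl
  rw [← hMR] at hyp hpow
  have hp : 4 < (C 0 1) ^ 2 := by
    have := hyp.two_lt_abs_trace
    rw [trace_rMatrix_mul_conj, lt_abs] at this
    rcases this with h | h <;> nlinarith [sq_nonneg (C 0 1)]
  obtain ⟨r, hr, hMK⟩ := exists_sq_eq_one_smul_of_mk_eq (A := K ^ n) (B := M) hpow.symm
  rw [Matrix.SpecialLinearGroup.coe_pow] at hMK
  by_contra! hn
  exact ne_smul_pow_of_trace_eq_two_sub_sq K.property hn hp hr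
    (rMatrix_mul_conj_apply_zero_one C) (trace_rMatrix_mul_conj C) hMK

theorem hyperbolic_two_factorizable_power_general (g : PSL2Z) (h : PSL2Z) (n : ℕ)
    (hyp : IsHyperbolic g)
    (hfac : ∃ t₁ t₂ : PSL2Z, IsDehnTwist t₁ ∧ IsDehnTwist t₂ ∧ g = t₁ * t₂)
    (hpow : g = h ^ n) :
    n ≤ 2 := by
  obtain ⟨t₁, t₂, ht₁, ht₂, rfl⟩ := hfac
  obtain ⟨a, rfl⟩ := isConj_iff.mp ht₁
  obtain ⟨b, rfl⟩ := isConj_iff.mp ht₂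
  have hconj : a⁻¹ * (a * R * a⁻¹ * (b * R * b⁻¹)) * a⁻¹⁻¹ =
      R * ((a⁻¹ * b) * R * (a⁻¹ * b)⁻¹) := by
    group
  refine le_two_of_R_mul_conj_eq_pow (k := a⁻¹ * h * a⁻¹⁻¹) (hconj ▸ hyp.conj a⁻¹) ?_
  rw [← hconj, hpow, conj_pow]

/-- If a hyperbolic element of `PSL(2,ℤ)` is a product of two Dehn twists and is
an `n`-th power with `n ≥ 1`, then `n ≤ 2`. -/
theorem hyperbolic_two_factorizable_power (g : PSL2Z) (h : PSL2Z) (n : ℕ)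
    (hyp : IsHyperbolic g)
    (hfac : ∃ t₁ t₂ : PSL2Z, IsDehnTwist t₁ ∧ IsDehnTwist t₂ ∧ g = t₁ * t₂)
    (hpow : g = h ^ n) (hn : 1 ≤ n) :
    n ≤ 2 :=
  hyperbolic_two_factorizable_power_general g h n hyp hfac hpow
end
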